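/- Let T(s) = C(sI − A)⁻¹B + D be a transfer function with A ∈ ℝ^{n×n}, B ∈ ℝ^{n×q}, C ∈ ℝ^{p×n}, D ∈ ℝ^{p×q}, ξ > 0 with D_ξ := DᵀD − ξ²I nonsingular, and ω ∈ ℝ with jω not an eigenvalue of A. Then T(jω) has a singular value equal to ξ if and only if jω is an eigenvalue of the Hamiltonian matrix H_ξ = [[A − B D_ξ⁻¹ Dᵀ C, −B D_ξ⁻¹ Bᵀ], [ξ² Cᵀ (D_ξ⁻ᵀ) C, −Aᵀ + Cᵀ D D_ξ⁻¹ Bᵀ]]. -/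

import Mathlib

/-!
The Hamiltonian is a Schur complement. Put `X = diag(sI - A, sI + Aᵀ)`,
`M = [[-I, D], [Dᵀ, -ξ²I]]`, `U = [[0, -B], [Cᵀ, 0]]` and `V = [[C, 0], [0, Bᵀ]]`. Then
`X - U M⁻¹ V = sI - H_ξ`, whereas `M - V X⁻¹ U = [[-I, T(s)], [T(-s)ᵀ, -ξ²I]]`. Expanding the
determinant of `[[X, U], [V, M]]` around either diagonal block gives
`det D_ξ · det (sI - H_ξ) = det (sI - A) · det (sI + Aᵀ) · det (T(-s)ᵀ T(s) - ξ²I)`.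
For real data and `s = jω` one has `T(-s)ᵀ = T(s)ᴴ`, and `jω` is not an eigenvalue of `A` or
of `-Aᵀ`, so `jω` is an eigenvalue of `H_ξ` iff `ξ²` is an eigenvalue of `T(jω)ᴴ T(jω)`.
-/

open Matrix

namespace Matrix

variable {m n : Type*} [Fintype m] [Fintype n] [DecidableEq m] [DecidableEq n]

section CommRing

variable {R : Type*} [CommRing R]

theorem inv_neg_of_isUnit {M : Matrix n n R} (h : IsUnit M) : (-M)⁻¹ = -M⁻¹ :=
  inv_eq_left_inv <| by rw [neg_mul_neg, nonsing_inv_mul _ ((isUnit_iff_isUnit_det M).mp h)]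

theorem det_mul_det_sub_mul_inv_mul_comm {X : Matrix m m R} {M : Matrix n n R}
    (hX : IsUnit X) (hM : IsUnit M) (U : Matrix m n R) (V : Matrix n m R) :
    X.det * (M - V * X⁻¹ * U).det = M.det * (X - U * M⁻¹ * V).det := by
  let := hX.invertible
  let := hM.invertible
  rw [← invOf_eq_nonsing_inv, ← invOf_eq_nonsing_inv, ← det_fromBlocks₁₁, det_fromBlocks₂₂]

theorem det_fromBlocks_neg_one (B : Matrix m n R) (C : Matrix n m R) (D : Matrix n n R) :
    (fromBlocks (-1) B C D).det = (-1) ^ Fintype.card m * (D + C * B).det := by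
  have : fromBlocks (-1) B C D = fromBlocks (-1) 0 0 1 * fromBlocks 1 (-B) C D := by
    simp [fromBlocks_multiply]
  rw [this, det_mul, det_fromBlocks_zero₂₁, det_fromBlocks_one₁₁, det_neg, det_one, det_one,
    mul_one, mul_one, Matrix.mul_neg, sub_neg_eq_add]

theorem inv_fromBlocks_neg_one {B : Matrix m n R} {C : Matrix n m R} {D : Matrix n n R}
    (h : IsUnit (D + C * B)) :
    (fromBlocks (-1) B C D)⁻¹ =
      fromBlocks (-1 + B * (D + C * B)⁻¹ * C) (B * (D + C * B)⁻¹)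
        ((D + C * B)⁻¹ * C) (D + C * B)⁻¹ := by
  have hS := mul_nonsing_inv _ ((isUnit_iff_isUnit_det _).mp h)
  have hC : C * (B * (D + C * B)⁻¹ * C) + D * ((D + C * B)⁻¹ * C) = C := by
    simp only [← Matrix.mul_assoc]
    rw [← Matrix.add_mul, ← Matrix.add_mul, add_comm, hS, Matrix.one_mul]
  have hI : C * (B * (D + C * B)⁻¹) + D * (D + C * B)⁻¹ = 1 := by
    rw [← Matrix.mul_assoc, ← Matrix.add_mul, add_comm, hS]
  refine inv_eq_right_inv ?_
  rw [fromBlocks_multiply, ← fromBlocks_one, fromBlocks_inj]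
  refine ⟨?_, ?_, ?_, hI⟩
  · simp only [Matrix.neg_mul, Matrix.one_mul, Matrix.mul_assoc]
    abel
  · simp only [Matrix.neg_mul, Matrix.one_mul]
    abel
  · rw [Matrix.mul_add, Matrix.mul_neg, Matrix.mul_one, add_assoc, hC, neg_add_cancel]

end CommRing

section Field

variable {K L : Type*} [Field K] [Field L]

theorem map_nonsing_inv (f : K →+* L) (M : Matrix n n K) : M⁻¹.map f = (M.map f)⁻¹ := by
  have hadj := RingHom.map_adjugate f M
  have hdet := RingHom.map_det f M
  simp only [RingHom.mapMatrix_apply] at hadj hdet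
  rw [inv_def, inv_def, Ring.inverse_eq_inv', Ring.inverse_eq_inv', ← hdet, ← hadj]
  ext i j
  simp [map_inv₀]

theorem smul_inv_mul_sub_smul_one {c : K} (hc : c ≠ 0) {B : Matrix m n K} {C : Matrix n m K}
    (h : IsUnit (C * B - c • 1)) :
    c • (B * C - c • 1)⁻¹ = -1 + B * (C * B - c • 1)⁻¹ * C := by
  have hS := mul_nonsing_inv _ ((isUnit_iff_isUnit_det _).mp h)
  have hB : (B * C - c • 1) * B = B * (C * B - c • 1) := by
    simp only [Matrix.sub_mul, Matrix.mul_sub, Matrix.mul_assoc, Matrix.smul_mul,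
      Matrix.mul_smul, Matrix.one_mul, Matrix.mul_one]
  have hinv : (B * C - c • 1) * (-1 + B * (C * B - c • 1)⁻¹ * C) = c • 1 := by
    rw [Matrix.mul_add, ← Matrix.mul_assoc, ← Matrix.mul_assoc, hB, Matrix.mul_assoc B, hS,
      Matrix.mul_one]
    simp
  rw [inv_eq_right_inv (B := c⁻¹ • (-1 + B * (C * B - c • 1)⁻¹ * C)), smul_smul,
    mul_inv_cancel₀ hc, one_smul]
  rw [Matrix.mul_smul, hinv, smul_smul, inv_mul_cancel₀ hc, one_smul]

theorem exists_mulVec_eq_smul_iff (M : Matrix n n K) (c : K) :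
    (∃ v, v ≠ 0 ∧ M *ᵥ v = c • v) ↔ (M - c • 1).det = 0 := by
  rw [← exists_mulVec_eq_zero_iff]
  simp only [sub_mulVec, smul_mulVec, one_mulVec, sub_eq_zero]

end Field

end Matrix

section Hamiltonian

variable {K L : Type*} [Field K] [Field L] {n p q : Type*}
  (A : Matrix n n K) (B : Matrix n q K) (C : Matrix p n K) (D : Matrix p q K)

noncomputable def transferFn [Fintype n] [DecidableEq n] (s : K) : Matrix p q K :=
  C * (s • 1 - A)⁻¹ * B + D

noncomputable def hamiltonian [Fintype p] [Fintype q] [DecidableEq p] [DecidableEq q] (ξ : K) :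
    Matrix (n ⊕ n) (n ⊕ n) K :=
  fromBlocks (A - B * (Dᵀ * D - ξ ^ 2 • 1)⁻¹ * Dᵀ * C) (-(B * (Dᵀ * D - ξ ^ 2 • 1)⁻¹ * Bᵀ))
    (ξ ^ 2 • (Cᵀ * ((D * Dᵀ - ξ ^ 2 • 1)ᵀ)⁻¹ * C)) (-Aᵀ + Cᵀ * D * (Dᵀ * D - ξ ^ 2 • 1)⁻¹ * Bᵀ)

theorem transferFn_map [Fintype n] [DecidableEq n] (f : K →+* L) (s : K) :
    (transferFn A B C D s).map f = transferFn (A.map f) (B.map f) (C.map f) (D.map f) (f s) := by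
  simp [transferFn, Matrix.map_add, Matrix.map_mul, Matrix.map_sub, Matrix.map_smul',
    map_nonsing_inv]

theorem hamiltonian_map [Fintype p] [Fintype q] [DecidableEq p] [DecidableEq q] (f : K →+* L)
    (ξ : K) :
    (hamiltonian A B C D ξ).map f = hamiltonian (A.map f) (B.map f) (C.map f) (D.map f) (f ξ) := by
  simp [hamiltonian, fromBlocks_map, Matrix.map_add, Matrix.map_mul, Matrix.map_sub,
    Matrix.map_neg, Matrix.map_smul', transpose_map, map_nonsing_inv]

variable {A B C D}

theorem hamiltonian_eq_add_mul_inv_mul [Fintype p] [Fintype q] [DecidableEq p] [DecidableEq q]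
    {ξ : K} (hξ : ξ ≠ 0) (hDξ : IsUnit (Dᵀ * D - ξ ^ 2 • 1)) :
    hamiltonian A B C D ξ = fromBlocks A 0 0 (-Aᵀ) +
      fromBlocks 0 (-B) Cᵀ 0 * (fromBlocks (-1) D Dᵀ (-(ξ ^ 2 • 1)))⁻¹ * fromBlocks C 0 0 Bᵀ := by
  have hS : -(ξ ^ 2 • 1) + Dᵀ * D = Dᵀ * D - ξ ^ 2 • 1 := neg_add_eq_sub _ _
  -- the `ξ² (D Dᵀ - ξ²)⁻¹` of the (2,1) block is the upper left block of the inverse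
  have hSξ : ξ ^ 2 • ((D * Dᵀ - ξ ^ 2 • 1)ᵀ)⁻¹ = -1 + D * (Dᵀ * D - ξ ^ 2 • 1)⁻¹ * Dᵀ := by
    rw [transpose_sub, transpose_mul, transpose_transpose, transpose_smul, transpose_one]
    exact smul_inv_mul_sub_smul_one (pow_ne_zero 2 hξ) hDξ
  rw [inv_fromBlocks_neg_one (hS ▸ hDξ), hS, fromBlocks_multiply, fromBlocks_multiply,
    fromBlocks_add, hamiltonian, ← Matrix.smul_mul, ← Matrix.mul_smul, hSξ]
  congr 1 <;> simp [Matrix.mul_assoc, sub_eq_add_neg]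

theorem transpose_transferFn_neg [Fintype n] [DecidableEq n] {s : K}
    (hF : IsUnit (s • 1 + Aᵀ)) :
    (transferFn A B C D (-s))ᵀ = Dᵀ - Bᵀ * (s • 1 + Aᵀ)⁻¹ * Cᵀ := by
  rw [transferFn, transpose_add, transpose_mul, transpose_mul, transpose_nonsing_inv,
    transpose_sub, transpose_smul, transpose_one, neg_smul, ← neg_add', inv_neg_of_isUnit hF]
  simp [Matrix.mul_assoc, sub_eq_add_neg, add_comm]

theorem det_mul_det_smul_one_sub_hamiltonian [Fintype n] [Fintype p] [Fintype q]
    [DecidableEq n] [DecidableEq p] [DecidableEq q] {s ξ : K} (hE : IsUnit (s • 1 - A))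
    (hF : IsUnit (s • 1 + Aᵀ)) (hξ : ξ ≠ 0) (hDξ : IsUnit (Dᵀ * D - ξ ^ 2 • 1)) :
    (Dᵀ * D - ξ ^ 2 • 1).det * (s • 1 - hamiltonian A B C D ξ).det =
      (s • 1 - A).det * (s • 1 + Aᵀ).det *
        ((transferFn A B C D (-s))ᵀ * transferFn A B C D s - ξ ^ 2 • 1).det := by
  set X : Matrix (n ⊕ n) (n ⊕ n) K := fromBlocks (s • 1 - A) 0 0 (s • 1 + Aᵀ)
  set M : Matrix (p ⊕ q) (p ⊕ q) K := fromBlocks (-1) D Dᵀ (-(ξ ^ 2 • 1))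
  set U : Matrix (n ⊕ n) (p ⊕ q) K := fromBlocks 0 (-B) Cᵀ 0
  set V : Matrix (p ⊕ q) (n ⊕ n) K := fromBlocks C 0 0 Bᵀ
  have hdetM : M.det = (-1) ^ Fintype.card p * (Dᵀ * D - ξ ^ 2 • 1).det := by
    rw [det_fromBlocks_neg_one, neg_add_eq_sub]
  have hM : IsUnit M := by
    rw [isUnit_iff_isUnit_det, hdetM]
    exact (isUnit_one.neg.pow _).mul ((isUnit_iff_isUnit_det _).mp hDξ)
  have hX : IsUnit X := isUnit_fromBlocks_zero₂₁.mpr ⟨hE, hF⟩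
  have hXinv : X⁻¹ = fromBlocks (s • 1 - A)⁻¹ 0 0 (s • 1 + Aᵀ)⁻¹ := by
    rw [inv_fromBlocks_zero₂₁_of_isUnit_iff _ _ _ (iff_of_true hE hF)]
    simp
  have hSchurM : M - V * X⁻¹ * U =
      fromBlocks (-1) (transferFn A B C D s) (transferFn A B C D (-s))ᵀ (-(ξ ^ 2 • 1)) := by
    rw [hXinv, transpose_transferFn_neg hF, transferFn]
    simp [M, U, V, fromBlocks_multiply, fromBlocks_neg, fromBlocks_add, Matrix.mul_assoc,
      sub_eq_add_neg, add_comm]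
  have hSchurX : X - U * M⁻¹ * V = s • 1 - hamiltonian A B C D ξ := by
    rw [hamiltonian_eq_add_mul_inv_mul hξ hDξ, ← sub_sub]
    congr 1
    rw [← fromBlocks_one, fromBlocks_smul, sub_eq_add_neg, fromBlocks_neg, fromBlocks_add]
    simp [X, sub_eq_add_neg]
  have key := det_mul_det_sub_mul_inv_mul_comm hX hM U V
  rw [hSchurM, hSchurX, det_fromBlocks_neg_one, hdetM, neg_add_eq_sub,
    det_fromBlocks_zero₂₁] at key
  refine mul_left_cancel₀ (pow_ne_zero (Fintype.card p) (neg_ne_zero.mpr (one_ne_zero (α := K)))) ?_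
  linear_combination -key

theorem det_hamiltonian_sub_smul_one_eq_zero_iff [Fintype n] [Fintype p] [Fintype q]
    [DecidableEq n] [DecidableEq p] [DecidableEq q] {s ξ : K} (hE : IsUnit (s • 1 - A))
    (hF : IsUnit (s • 1 + Aᵀ)) (hξ : ξ ≠ 0) (hDξ : IsUnit (Dᵀ * D - ξ ^ 2 • 1)) :
    (hamiltonian A B C D ξ - s • 1).det = 0 ↔
      ((transferFn A B C D (-s))ᵀ * transferFn A B C D s - ξ ^ 2 • 1).det = 0 := by
  have hdetE := ((isUnit_iff_isUnit_det _).mp hE).ne_zero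
  have hdetF := ((isUnit_iff_isUnit_det _).mp hF).ne_zero
  have hdetDξ := ((isUnit_iff_isUnit_det _).mp hDξ).ne_zero
  rw [← neg_sub, det_neg, mul_eq_zero_iff_left (by simp), ← mul_eq_zero_iff_left hdetDξ,
    det_mul_det_smul_one_sub_hamiltonian hE hF hξ hDξ,
    mul_eq_zero_iff_left (mul_ne_zero hdetE hdetF)]

end Hamiltonian

section Real

variable {n p q : Type*}

theorem conjTranspose_transferFn_map_ofReal [Fintype n] [DecidableEq n] (A : Matrix n n ℝ)
    (B : Matrix n q ℝ) (C : Matrix p n ℝ) (D : Matrix p q ℝ) (s : ℂ) :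
    (transferFn (A.map (↑)) (B.map (↑)) (C.map (↑)) (D.map (↑)) s)ᴴ =
      (transferFn (A.map (↑)) (B.map (↑)) (C.map (↑)) (D.map (↑)) (star s))ᵀ := by
  rw [conjTranspose, transpose_map]
  congr 1
  simpa [Matrix.map_map, Function.comp_def] using
    transferFn_map (A.map (↑)) (B.map (↑)) (C.map (↑)) (D.map (↑)) (starRingEnd ℂ) s

theorem smul_one_add_transpose_map_ofReal [DecidableEq n] (A : Matrix n n ℝ) {s : ℂ}
    (hs : star s = -s) :
    s • 1 + (A.map (↑))ᵀ = -(s • 1 - A.map ((↑) : ℝ → ℂ))ᴴ := by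
  rw [conjTranspose_sub, conjTranspose_smul, conjTranspose_one, hs, neg_sub, neg_smul,
    sub_neg_eq_add, add_comm]
  congr 1
  ext
  simp

end Real

/-- For T(s) = C(sI−A)⁻¹B + D with D_ξ = DᵀD − ξ²I nonsingular and jω
not an eigenvalue of A, T(jω) has a singular value equal to ξ iff jω is an eigenvalue
of the Hamiltonian matrix H_ξ. (In the (2,1) block, `D_ξ⁻ᵀ` is the p×p companion
matrix (DDᵀ − ξ²I)⁻ᵀ, as dimensions dictate; it is invertible since D_ξ is.) -/
theorem stmt2 (n p q : ℕ) (A : Matrix (Fin n) (Fin n) ℝ) (B : Matrix (Fin n) (Fin q) ℝ)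
    (C : Matrix (Fin p) (Fin n) ℝ) (D : Matrix (Fin p) (Fin q) ℝ) (ξ ω : ℝ) (hξ : 0 < ξ)
    (hDξ : IsUnit (Dᵀ * D - ξ ^ 2 • (1 : Matrix (Fin q) (Fin q) ℝ)))
    (hω : ∀ v : Fin n → ℂ, (A.map Complex.ofReal).mulVec v = (Complex.I * ω) • v → v = 0) :
    let Dξ : Matrix (Fin q) (Fin q) ℝ := Dᵀ * D - ξ ^ 2 • 1
    let Sξ : Matrix (Fin p) (Fin p) ℝ := D * Dᵀ - ξ ^ 2 • 1
    let T : Matrix (Fin p) (Fin q) ℂ :=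
      (C.map Complex.ofReal) *
        ((Complex.I * ω) • (1 : Matrix (Fin n) (Fin n) ℂ) - A.map Complex.ofReal)⁻¹ *
        (B.map Complex.ofReal) + D.map Complex.ofReal
    let Hξ : Matrix (Fin n ⊕ Fin n) (Fin n ⊕ Fin n) ℝ :=
      Matrix.fromBlocks (A - B * Dξ⁻¹ * Dᵀ * C) (-(B * Dξ⁻¹ * Bᵀ))
        (ξ ^ 2 • (Cᵀ * (Sξᵀ)⁻¹ * C)) (-Aᵀ + Cᵀ * D * Dξ⁻¹ * Bᵀ)
    ((∃ u : Fin q → ℂ, u ≠ 0 ∧ (Tᴴ * T).mulVec u = ((ξ : ℂ) ^ 2) • u) ↔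
      (∃ w : Fin n ⊕ Fin n → ℂ, w ≠ 0 ∧
        (Hξ.map Complex.ofReal).mulVec w = (Complex.I * ω) • w)) := by
  intro Dξ Sξ T Hξ
  set s : ℂ := Complex.I * ω
  set Ac := A.map Complex.ofReal
  set Bc := B.map Complex.ofReal
  set Cc := C.map Complex.ofReal
  set Dc := D.map Complex.ofReal
  have hs : star s = -s := by simp [s]
  have hE : IsUnit (s • 1 - Ac) := by
    rw [← neg_sub, IsUnit.neg_iff, isUnit_iff_isUnit_det, isUnit_iff_ne_zero, Ne,
      ← exists_mulVec_eq_smul_iff]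
    rintro ⟨v, hv0, hv⟩
    exact hv0 (hω v hv)
  have hF : IsUnit (s • 1 + Acᵀ) := by
    rw [smul_one_add_transpose_map_ofReal A hs, IsUnit.neg_iff, isUnit_conjTranspose]
    exact hE
  have hDξc : IsUnit (Dcᵀ * Dc - (ξ : ℂ) ^ 2 • 1) := by
    convert hDξ.map Complex.ofRealHom.mapMatrix using 1
    simp [Dc, Matrix.map_sub, Matrix.map_mul, transpose_map, Matrix.map_smul', Matrix.map_one]
    rfl
  have hT : Tᴴ = (transferFn Ac Bc Cc Dc (-s))ᵀ := by
    rw [← hs]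
    exact conjTranspose_transferFn_map_ofReal A B C D s
  have hH : Hξ.map Complex.ofReal = hamiltonian Ac Bc Cc Dc (ξ : ℂ) :=
    hamiltonian_map A B C D Complex.ofRealHom ξ
  rw [exists_mulVec_eq_smul_iff, exists_mulVec_eq_smul_iff, hH, hT,
    det_hamiltonian_sub_smul_one_eq_zero_iff hE hF (by exact_mod_cast hξ.ne') hDξc]
  rfl
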